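/- Let Ω be a finite probability space with binary random variables Y, Y* and a random variable S. Assume one-sided label-dependent noise: P(Y=1,Y*=0) = 0 and Y is conditionally independent of S given Y*, with noise rate γ = P(Y=0|Y*=1). Then for every value s with P(S=s) > 0 and P(Y*=1|S=s) well-defined, E[Y | S=s] = (1-γ)·E[Y* | S=s]. In particular, if additionally a group variable A satisfies the same assumptions with the same γ in each group, then E[Y|S=s,A=a] = (1-γ)·E[Y*|S=s,A=a], so calibration of S with respect to Y across groups is equivalent to calibration with respect to Y*. -/

import Mathlib

open Classical

/-- Probability of an event under a weight function on a finite type. -/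
noncomputable def Pr {Ω : Type*} [Fintype Ω] (p : Ω → ℝ) (E : Ω → Prop) : ℝ :=
  ∑ ω, if E ω then p ω else 0

/-!
Since there are no false positives, the event `Y = 1` lies (up to a null set) inside `Y* = 1`,
so `P(Y = 1, S = s, A = a) = P(Y = 1, Y* = 1, S = s, A = a)`. Conditional independence of `Y`
and `(S, A)` given `Y* = 1` factors this as `P(Y = 1 | Y* = 1) · P(Y* = 1, S = s, A = a)`, and
`P(Y = 1 | Y* = 1) = 1 - γ`. Summing over `a` and dividing by `P(S = s)` or `P(S = s, A = a)`
gives both identities.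
-/

section Pr

variable {Ω : Type*} [Fintype Ω] (p : Ω → ℝ)

lemma Pr_eq_sum_filter (E : Ω → Prop) : Pr p E = ∑ ω ∈ Finset.univ.filter E, p ω :=
  (Finset.sum_filter _ _).symm

lemma Pr_congr {E F : Ω → Prop} (h : ∀ ω, E ω ↔ F ω) : Pr p E = Pr p F := by
  rw [show E = F from funext fun ω => propext (h ω)]

lemma Pr_eq_add_not (E Q : Ω → Prop) :
    Pr p E = Pr p (fun ω => E ω ∧ Q ω) + Pr p (fun ω => E ω ∧ ¬ Q ω) := by
  simp only [Pr, ← Finset.sum_add_distrib]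
  exact Finset.sum_congr rfl fun ω _ => by by_cases E ω <;> by_cases Q ω <;> simp [*]

lemma Pr_eq_add_bool (E : Ω → Prop) (A : Ω → Bool) :
    Pr p E = Pr p (fun ω => E ω ∧ A ω = true) + Pr p (fun ω => E ω ∧ A ω = false) := by
  simpa only [Bool.not_eq_true] using Pr_eq_add_not p E (fun ω => A ω = true)

lemma Pr_eq_zero_of_imp (hp : ∀ ω, 0 ≤ p ω) {E F : Ω → Prop} (h : ∀ ω, E ω → F ω)
    (hF : Pr p F = 0) : Pr p E = 0 := by
  refine le_antisymm ?_ (Finset.sum_nonneg fun ω _ => by split_ifs <;> simp [hp ω])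
  rw [← hF, Pr_eq_sum_filter, Pr_eq_sum_filter]
  exact Finset.sum_le_sum_of_subset_of_nonneg (Finset.monotone_filter_right _ fun ω _ => h ω)
    fun ω _ _ => hp ω

end Pr

section LabelNoise

variable {Ω : Type*} [Fintype Ω] (p : Ω → ℝ) (Y Ystar : Ω → ℕ)

noncomputable def noiseRate : ℝ :=
  Pr p (fun ω => Y ω = 0 ∧ Ystar ω = 1) / Pr p (fun ω => Ystar ω = 1)

variable {p Y Ystar}

lemma Pr_obs_and_eq_obs_and_true (hp : ∀ ω, 0 ≤ p ω)
    (hbinYs : ∀ ω, Ystar ω = 0 ∨ Ystar ω = 1)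
    (honesided : Pr p (fun ω => Y ω = 1 ∧ Ystar ω = 0) = 0) (E : Ω → Prop) :
    Pr p (fun ω => Y ω = 1 ∧ E ω) = Pr p (fun ω => Y ω = 1 ∧ E ω ∧ Ystar ω = 1) := by
  have hnull : Pr p (fun ω => (Y ω = 1 ∧ E ω) ∧ ¬ Ystar ω = 1) = 0 :=
    Pr_eq_zero_of_imp p hp (fun ω ⟨⟨hY, _⟩, hYs⟩ => ⟨hY, (hbinYs ω).resolve_right hYs⟩)
      honesided
  rw [Pr_eq_add_not p _ (fun ω => Ystar ω = 1), hnull, add_zero]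
  exact Pr_congr p fun _ => and_assoc

lemma Pr_obs_and_true_eq (hbinY : ∀ ω, Y ω = 0 ∨ Y ω = 1)
    (hYs1 : Pr p (fun ω => Ystar ω = 1) ≠ 0) :
    Pr p (fun ω => Y ω = 1 ∧ Ystar ω = 1)
      = (1 - noiseRate p Y Ystar) * Pr p (fun ω => Ystar ω = 1) := by
  have hsplit := Pr_eq_add_not p (fun ω => Ystar ω = 1) (fun ω => Y ω = 1)
  have hneg : Pr p (fun ω => Ystar ω = 1 ∧ ¬ Y ω = 1)
      = noiseRate p Y Ystar * Pr p (fun ω => Ystar ω = 1) := by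
    rw [noiseRate, div_mul_cancel₀ _ hYs1]
    exact Pr_congr p fun ω => by rcases hbinY ω with h | h <;> simp [h]
  rw [hneg, Pr_congr p fun _ => and_comm] at hsplit
  linarith

lemma Pr_obs_and_eq_of_condIndep (hp : ∀ ω, 0 ≤ p ω)
    (hbinY : ∀ ω, Y ω = 0 ∨ Y ω = 1) (hbinYs : ∀ ω, Ystar ω = 0 ∨ Ystar ω = 1)
    (honesided : Pr p (fun ω => Y ω = 1 ∧ Ystar ω = 0) = 0)
    (hYs1 : Pr p (fun ω => Ystar ω = 1) ≠ 0) (E : Ω → Prop)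
    (hCI : Pr p (fun ω => Y ω = 1 ∧ E ω ∧ Ystar ω = 1) * Pr p (fun ω => Ystar ω = 1)
      = Pr p (fun ω => Y ω = 1 ∧ Ystar ω = 1) * Pr p (fun ω => E ω ∧ Ystar ω = 1)) :
    Pr p (fun ω => Y ω = 1 ∧ E ω)
      = (1 - noiseRate p Y Ystar) * Pr p (fun ω => Ystar ω = 1 ∧ E ω) := by
  rw [Pr_obs_and_eq_obs_and_true hp hbinYs honesided,
    Pr_congr p (E := fun ω => Ystar ω = 1 ∧ E ω) fun _ => and_comm]
  apply mul_right_cancel₀ hYs1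
  rw [hCI, Pr_obs_and_true_eq hbinY hYs1]
  ring

end LabelNoise

theorem stmt_18_general {Ω : Type*} [Fintype Ω] (p : Ω → ℝ)
    (hp : ∀ ω, 0 ≤ p ω)
    (Y Ystar : Ω → ℕ) (S : Ω → ℝ) (A : Ω → Bool)
    (hbinY : ∀ ω, Y ω = 0 ∨ Y ω = 1)
    (hbinYs : ∀ ω, Ystar ω = 0 ∨ Ystar ω = 1)
    -- one-sided noise: no false positives in the observed label
    (honesided : Pr p (fun ω => Y ω = 1 ∧ Ystar ω = 0) = 0)
    -- Y ⊥ (S, A) ∣ Y*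
    (hCI : ∀ (b c : ℕ) (s : ℝ) (a : Bool),
      Pr p (fun ω => Y ω = b ∧ S ω = s ∧ A ω = a ∧ Ystar ω = c) * Pr p (fun ω => Ystar ω = c)
        = Pr p (fun ω => Y ω = b ∧ Ystar ω = c)
          * Pr p (fun ω => S ω = s ∧ A ω = a ∧ Ystar ω = c))
    (hYs1 : 0 < Pr p (fun ω => Ystar ω = 1))
    (γ : ℝ)
    (hγ : γ = Pr p (fun ω => Y ω = 0 ∧ Ystar ω = 1) / Pr p (fun ω => Ystar ω = 1)) :
    (∀ s : ℝ, 0 < Pr p (fun ω => S ω = s) →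
      Pr p (fun ω => Y ω = 1 ∧ S ω = s) / Pr p (fun ω => S ω = s)
        = (1 - γ) * (Pr p (fun ω => Ystar ω = 1 ∧ S ω = s) / Pr p (fun ω => S ω = s)))
    ∧ (∀ (s : ℝ) (a : Bool), 0 < Pr p (fun ω => S ω = s ∧ A ω = a) →
      Pr p (fun ω => Y ω = 1 ∧ S ω = s ∧ A ω = a) / Pr p (fun ω => S ω = s ∧ A ω = a)
        = (1 - γ) * (Pr p (fun ω => Ystar ω = 1 ∧ S ω = s ∧ A ω = a)
            / Pr p (fun ω => S ω = s ∧ A ω = a))) := by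
  have key : ∀ (s : ℝ) (a : Bool), Pr p (fun ω => Y ω = 1 ∧ S ω = s ∧ A ω = a)
      = (1 - γ) * Pr p (fun ω => Ystar ω = 1 ∧ S ω = s ∧ A ω = a) := fun s a =>
    hγ ▸ Pr_obs_and_eq_of_condIndep hp hbinY hbinYs honesided hYs1.ne' _
      (by simpa only [and_assoc] using hCI 1 1 s a)
  refine ⟨fun s _ => ?_, fun s a _ => by rw [key s a, mul_div_assoc]⟩
  have hY := Pr_eq_add_bool p (fun ω => Y ω = 1 ∧ S ω = s) A
  have hYs := Pr_eq_add_bool p (fun ω => Ystar ω = 1 ∧ S ω = s) A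
  simp only [and_assoc] at hY hYs
  rw [hY, hYs, key s true, key s false]
  ring

theorem stmt_18 {Ω : Type*} [Fintype Ω] (p : Ω → ℝ)
    (hp : ∀ ω, 0 ≤ p ω) (hp1 : ∑ ω, p ω = 1)
    (Y Ystar : Ω → ℕ) (S : Ω → ℝ) (A : Ω → Bool)
    (hbinY : ∀ ω, Y ω = 0 ∨ Y ω = 1)
    (hbinYs : ∀ ω, Ystar ω = 0 ∨ Ystar ω = 1)
    -- one-sided noise: no false positives in the observed label
    (honesided : Pr p (fun ω => Y ω = 1 ∧ Ystar ω = 0) = 0)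
    -- Y ⊥ (S, A) ∣ Y*
    (hCI : ∀ (b c : ℕ) (s : ℝ) (a : Bool),
      Pr p (fun ω => Y ω = b ∧ S ω = s ∧ A ω = a ∧ Ystar ω = c) * Pr p (fun ω => Ystar ω = c)
        = Pr p (fun ω => Y ω = b ∧ Ystar ω = c)
          * Pr p (fun ω => S ω = s ∧ A ω = a ∧ Ystar ω = c))
    (hYs1 : 0 < Pr p (fun ω => Ystar ω = 1))
    (γ : ℝ)
    (hγ : γ = Pr p (fun ω => Y ω = 0 ∧ Ystar ω = 1) / Pr p (fun ω => Ystar ω = 1)) :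
    (∀ s : ℝ, 0 < Pr p (fun ω => S ω = s) →
      Pr p (fun ω => Y ω = 1 ∧ S ω = s) / Pr p (fun ω => S ω = s)
        = (1 - γ) * (Pr p (fun ω => Ystar ω = 1 ∧ S ω = s) / Pr p (fun ω => S ω = s)))
    ∧ (∀ (s : ℝ) (a : Bool), 0 < Pr p (fun ω => S ω = s ∧ A ω = a) →
      Pr p (fun ω => Y ω = 1 ∧ S ω = s ∧ A ω = a) / Pr p (fun ω => S ω = s ∧ A ω = a)
        = (1 - γ) * (Pr p (fun ω => Ystar ω = 1 ∧ S ω = s ∧ A ω = a)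
            / Pr p (fun ω => S ω = s ∧ A ω = a))) :=
  stmt_18_general p hp Y Ystar S A hbinY hbinYs honesided hCI hYs1 γ hγ
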